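/- Let λ be an antidominant composition and let σ, σ' be appropriate fillings of dg'(λ). If for every j ≥ 1 the sets of values {σ(u) : u = (i,j) ∈ dg'(λ)} and {σ'(u) : u = (i,j) ∈ dg'(λ)} taken on the j-th row coincide, then σ = σ'. -/

import Mathlib

open Finset

namespace CO

/-- The column diagram `dg'(λ)` of a composition, as a finset of boxes `(i, j)`,
`1 ≤ i ≤ n`, `1 ≤ j ≤ λ_i`. -/
def dgF (n : ℕ) (lam : ℕ → ℕ) : Finset (ℕ × ℕ) :=
  (Finset.Icc 1 n).biUnion fun i => (Finset.Icc 1 (lam i)).image fun j => (i, j)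

/-- The augmented diagram `d̂g(λ)`: one extra box `(i, 0)` below each column. -/
def augF (n : ℕ) (lam : ℕ → ℕ) : Finset (ℕ × ℕ) :=
  dgF n lam ∪ (Finset.Icc 1 n).image fun i => (i, 0)

/-- The box `d(u)` directly below a box. -/
def dbox (u : ℕ × ℕ) : ℕ × ℕ := (u.1, u.2 - 1)

/-- The augmented filling `σ̂`: equal to `σ` on positive rows and to `i` on `(i, 0)`. -/
def aug (σ : ℕ × ℕ → ℕ) (u : ℕ × ℕ) : ℕ := if u.2 = 0 then u.1 else σ u

/-- A filling takes values in `{1, …, n}` on the diagram. -/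
def IsFilling (n : ℕ) (lam : ℕ → ℕ) (σ : ℕ × ℕ → ℕ) : Prop :=
  ∀ u ∈ dgF n lam, 1 ≤ σ u ∧ σ u ≤ n

/-- Attacking boxes: same row, or consecutive rows with the lower box to the right. -/
def Attack (u v : ℕ × ℕ) : Prop :=
  u ≠ v ∧ (u.2 = v.2 ∨ (u.2 = v.2 + 1 ∧ u.1 < v.1) ∨ (v.2 = u.2 + 1 ∧ v.1 < u.1))

/-- A non-attacking filling: `σ̂` takes distinct values on attacking pairs of the
augmented diagram. -/
def NonAttacking (n : ℕ) (lam : ℕ → ℕ) (σ : ℕ × ℕ → ℕ) : Prop :=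
  ∀ u ∈ augF n lam, ∀ v ∈ augF n lam, Attack u v → aug σ u ≠ aug σ v

/-- The arm of a box `u`. -/
def armF (n : ℕ) (lam : ℕ → ℕ) (u : ℕ × ℕ) : Finset (ℕ × ℕ) :=
  ((dgF n lam).filter fun v => v.1 < u.1 ∧ v.2 = u.2 ∧ lam v.1 ≤ lam u.1) ∪
    ((augF n lam).filter fun v => u.1 < v.1 ∧ v.2 + 1 = u.2 ∧ lam v.1 < lam u.1)

/-- `a(u) = |arm(u)|`. -/
def armCard (n : ℕ) (lam : ℕ → ℕ) (u : ℕ × ℕ) : ℕ := (armF n lam u).card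

/-- The number of inversions of `σ̂`: attacking pairs `u, u'` with `σ̂(u) < σ̂(u')`
and (same row with `u` to the left, or `u'` one row above `u` strictly to the left). -/
def invCard (n : ℕ) (lam : ℕ → ℕ) (σ : ℕ × ℕ → ℕ) : ℕ :=
  ((augF n lam ×ˢ augF n lam).filter fun p =>
    aug σ p.1 < aug σ p.2 ∧
      ((p.1.2 = p.2.2 ∧ p.1.1 < p.2.1) ∨ (p.2.2 = p.1.2 + 1 ∧ p.2.1 < p.1.1))).card

/-- The descent set of `σ̂`. -/
def desF (n : ℕ) (lam : ℕ → ℕ) (σ : ℕ × ℕ → ℕ) : Finset (ℕ × ℕ) :=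
  (dgF n lam).filter fun u => aug σ (dbox u) < aug σ u

/-- The statistic `coinv(σ̂)` (as an integer). -/
def coinv (n : ℕ) (lam : ℕ → ℕ) (σ : ℕ × ℕ → ℕ) : ℤ :=
  (∑ u ∈ dgF n lam, (armCard n lam u : ℤ)) - invCard n lam σ +
    (((Finset.Icc 1 n ×ˢ Finset.Icc 1 n).filter fun p =>
      p.1 < p.2 ∧ lam p.1 ≤ lam p.2).card : ℤ) +
    ∑ u ∈ desF n lam σ, (armCard n lam u : ℤ)

/-- The statistic `T(σ)`. -/
def Tstat (n : ℕ) (lam : ℕ → ℕ) (σ : ℕ × ℕ → ℕ) : ℤ :=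
  coinv n lam σ -
    ∑ u ∈ (dgF n lam).filter fun u => aug σ u ≠ aug σ (dbox u), (armCard n lam u : ℤ)

/-- Antidominant composition: `λ_1 ≤ ⋯ ≤ λ_n`. -/
def Antidominant (n : ℕ) (lam : ℕ → ℕ) : Prop :=
  ∀ i j, 1 ≤ i → i ≤ j → j ≤ n → lam i ≤ lam j

/-- Appropriate filling: non-attacking with `T(σ) = 0`. -/
def Appropriate (n : ℕ) (lam : ℕ → ℕ) (σ : ℕ × ℕ → ℕ) : Prop :=
  IsFilling n lam σ ∧ NonAttacking n lam σ ∧ Tstat n lam σ = 0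

/-- The operation `π` on compositions: `π(λ) = (λ_n + 1, λ_1, …, λ_{n-1})`. -/
def piComp (n : ℕ) (lam : ℕ → ℕ) : ℕ → ℕ :=
  fun i => if i = 1 then lam n + 1 else lam (i - 1)

/-- The operation `π` on boxes. -/
def piBox (n : ℕ) (u : ℕ × ℕ) : ℕ × ℕ :=
  if u.1 < n then (u.1 + 1, u.2) else (1, u.2 + 1)

/-- Extension by zero of a function defined on the diagram. -/
def ext (n : ℕ) (lam : ℕ → ℕ) (f : {u // u ∈ dgF n lam} → ℕ) : ℕ × ℕ → ℕ :=
  fun u => if h : u ∈ dgF n lam then f ⟨u, h⟩ else 0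

/-- `qstat(σ) = Σ (l(u) + 1)` over boxes `u` with `σ̂(u) < σ̂(d(u))`. -/
def qstat (n : ℕ) (lam : ℕ → ℕ) (σ : ℕ × ℕ → ℕ) : ℕ :=
  ∑ u ∈ (dgF n lam).filter fun u => aug σ u < aug σ (dbox u), (lam u.1 - u.2 + 1)

end CO

namespace COaux
open CO Finset

variable {n : ℕ} {lam : ℕ → ℕ} {σ : ℕ × ℕ → ℕ}

lemma mem_dgF {u : ℕ × ℕ} :
    u ∈ dgF n lam ↔ 1 ≤ u.1 ∧ u.1 ≤ n ∧ 1 ≤ u.2 ∧ u.2 ≤ lam u.1 := by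
  rcases u with ⟨i, j⟩
  simp only [dgF, Finset.mem_biUnion, Finset.mem_image, Finset.mem_Icc, Prod.mk.injEq]
  constructor
  · rintro ⟨a, ⟨h1, h2⟩, b, ⟨h3, h4⟩, rfl, rfl⟩; exact ⟨h1, h2, h3, h4⟩
  · rintro ⟨h1, h2, h3, h4⟩; exact ⟨i, ⟨h1, h2⟩, j, ⟨h3, h4⟩, rfl, rfl⟩

lemma mem_augF {u : ℕ × ℕ} :
    u ∈ augF n lam ↔ u ∈ dgF n lam ∨ (1 ≤ u.1 ∧ u.1 ≤ n ∧ u.2 = 0) := by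
  rcases u with ⟨i, j⟩
  simp only [augF, mem_union, mem_image, mem_Icc, Prod.mk.injEq]
  constructor
  · rintro (h | ⟨a, ha, rfl, rfl⟩)
    · exact Or.inl h
    · exact Or.inr ⟨ha.1, ha.2, rfl⟩
  · rintro (h | ⟨h1, h2, rfl⟩)
    · exact Or.inl h
    · exact Or.inr ⟨i, ⟨h1, h2⟩, rfl, rfl⟩

lemma mem_augF' {u : ℕ × ℕ} :
    u ∈ augF n lam ↔ 1 ≤ u.1 ∧ u.1 ≤ n ∧ (u.2 = 0 ∨ u.2 ≤ lam u.1) := by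
  rw [mem_augF, mem_dgF]; omega

/-- The set of same-row ordered pairs (left box, right box) in the diagram. -/
def PP (n : ℕ) (lam : ℕ → ℕ) : Finset ((ℕ × ℕ) × (ℕ × ℕ)) :=
  (dgF n lam ×ˢ dgF n lam).filter fun p => p.1.2 = p.2.2 ∧ p.1.1 < p.2.1

lemma mem_PP {p : (ℕ × ℕ) × (ℕ × ℕ)} :
    p ∈ PP n lam ↔ p.1 ∈ dgF n lam ∧ p.2 ∈ dgF n lam ∧ p.1.2 = p.2.2 ∧ p.1.1 < p.2.1 := by
  simp [PP, Finset.mem_filter, Finset.mem_product, and_assoc]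

/-- The local statistic per pair. -/
def cN (σ : ℕ × ℕ → ℕ) (p : (ℕ × ℕ) × (ℕ × ℕ)) : ℕ :=
  (if σ p.1 < σ p.2 then 1 else 0) + (if aug σ (dbox p.2) < σ p.1 then 1 else 0)
    + (if σ p.2 < aug σ (dbox p.2) then 1 else 0)

lemma armF_eq (hanti : Antidominant n lam) {u : ℕ × ℕ} (h1 : 1 ≤ u.1) (h2 : u.1 ≤ n) :
    armF n lam u = (dgF n lam).filter fun v => v.1 < u.1 ∧ v.2 = u.2 := by
  ext v
  simp only [armF, Finset.mem_union, Finset.mem_filter]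
  constructor
  · rintro (⟨hv, h⟩ | ⟨hv, hlt, _, hl⟩)
    · exact ⟨hv, h.1, h.2.1⟩
    · exfalso
      have hv' : v.1 ≤ n := (mem_augF'.1 hv).2.1
      have := hanti u.1 v.1 h1 hlt.le hv'
      omega
  · rintro ⟨hv, hlt, heq⟩
    have hv1 := mem_dgF.1 hv
    exact Or.inl ⟨hv, hlt, heq, hanti v.1 u.1 hv1.1 hlt.le h2⟩

lemma sum_arm (hanti : Antidominant n lam) (q : ℕ × ℕ → Prop) [DecidablePred q] :
    ∑ u ∈ (dgF n lam).filter q, armCard n lam u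
      = ((PP n lam).filter fun p => q p.2).card := by
  rw [Finset.card_eq_sum_card_fiberwise
    (f := Prod.snd) (t := (dgF n lam).filter q)
    (fun p hp => by
      rw [Finset.mem_coe, Finset.mem_filter] at hp
      exact Finset.mem_coe.2 (Finset.mem_filter.2 ⟨(mem_PP.1 hp.1).2.1, hp.2⟩))]
  refine Finset.sum_congr rfl fun u hu => ?_
  rw [Finset.mem_filter] at hu
  have hu1 := mem_dgF.1 hu.1
  have himg : (((PP n lam).filter fun p => q p.2).filter fun p => p.2 = u)
      = ((dgF n lam).filter fun v => v.1 < u.1 ∧ v.2 = u.2).image fun v => (v, u) := by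
    ext p
    simp only [Finset.mem_filter, Finset.mem_image, mem_PP]
    constructor
    · rintro ⟨⟨⟨hp1, hp2, hrow, hlt⟩, hq⟩, rfl⟩
      exact ⟨p.1, ⟨hp1, hlt, hrow⟩, rfl⟩
    · rintro ⟨v, ⟨hv, hlt, hrow⟩, rfl⟩
      exact ⟨⟨⟨hv, hu.1, hrow, hlt⟩, hu.2⟩, rfl⟩
  rw [armCard, armF_eq hanti hu1.1 hu1.2.1, himg,
    Finset.card_image_of_injective _ (fun a b h => by simpa using congrArg Prod.fst h)]

end COaux

namespace COaux2
open CO Finset COaux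

variable {n : ℕ} {lam : ℕ → ℕ} {σ : ℕ × ℕ → ℕ}

lemma aug_eq_of_ne {u : ℕ × ℕ} (h : u.2 ≠ 0) : aug σ u = σ u := if_neg h
lemma aug_zero {u : ℕ × ℕ} (h : u.2 = 0) : aug σ u = u.1 := if_pos h

lemma mem_dgF_of_augF {u : ℕ × ℕ} (hu : u ∈ augF n lam) (h : u.2 ≠ 0) :
    u ∈ dgF n lam := by
  rcases mem_augF.1 hu with h' | h'
  · exact h'
  · exact absurd h'.2.2 h

lemma invCard_eq (hanti : Antidominant n lam) :
    invCard n lam σ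
      = ((Finset.Icc 1 n ×ˢ Finset.Icc 1 n).filter fun p => p.1 < p.2 ∧ lam p.1 ≤ lam p.2).card
        + ((PP n lam).filter fun p => σ p.1 < σ p.2).card
        + ((PP n lam).filter fun p => aug σ (dbox p.2) < σ p.1).card := by
  classical
  set A := augF n lam ×ˢ augF n lam with hA
  have hsplit : invCard n lam σ
      = (A.filter fun p => aug σ p.1 < aug σ p.2 ∧ p.1.2 = p.2.2 ∧ p.1.1 < p.2.1).card
        + (A.filter fun p => aug σ p.1 < aug σ p.2 ∧ p.2.2 = p.1.2 + 1 ∧ p.2.1 < p.1.1).card := by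
    rw [invCard,
      show (A.filter fun p => aug σ p.1 < aug σ p.2 ∧
          ((p.1.2 = p.2.2 ∧ p.1.1 < p.2.1) ∨ (p.2.2 = p.1.2 + 1 ∧ p.2.1 < p.1.1)))
        = (A.filter fun p => aug σ p.1 < aug σ p.2 ∧ p.1.2 = p.2.2 ∧ p.1.1 < p.2.1)
          ∪ (A.filter fun p => aug σ p.1 < aug σ p.2 ∧ p.2.2 = p.1.2 + 1 ∧ p.2.1 < p.1.1) by
        ext p; simp only [Finset.mem_filter, Finset.mem_union]; tauto]
    exact Finset.card_union_of_disjoint (by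
      rw [Finset.disjoint_left]
      intro p hp hp'
      rw [Finset.mem_filter] at hp hp'
      omega)
  have hsplit2 : (A.filter fun p => aug σ p.1 < aug σ p.2 ∧ p.1.2 = p.2.2 ∧ p.1.1 < p.2.1).card
      = (A.filter fun p => (aug σ p.1 < aug σ p.2 ∧ p.1.2 = p.2.2 ∧ p.1.1 < p.2.1) ∧ p.1.2 = 0).card
        + (A.filter fun p => (aug σ p.1 < aug σ p.2 ∧ p.1.2 = p.2.2 ∧ p.1.1 < p.2.1) ∧ ¬ p.1.2 = 0).card := by
    have e1 : (A.filter fun p => (aug σ p.1 < aug σ p.2 ∧ p.1.2 = p.2.2 ∧ p.1.1 < p.2.1) ∧ p.1.2 = 0)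
        = ((A.filter fun p => aug σ p.1 < aug σ p.2 ∧ p.1.2 = p.2.2 ∧ p.1.1 < p.2.1).filter
            fun p => p.1.2 = 0) := (Finset.filter_filter _ _ _).symm
    have e2 : (A.filter fun p => (aug σ p.1 < aug σ p.2 ∧ p.1.2 = p.2.2 ∧ p.1.1 < p.2.1) ∧ ¬ p.1.2 = 0)
        = ((A.filter fun p => aug σ p.1 < aug σ p.2 ∧ p.1.2 = p.2.2 ∧ p.1.1 < p.2.1).filter
            fun p => ¬ p.1.2 = 0) := (Finset.filter_filter _ _ _).symm
    rw [e1, e2, Finset.card_filter_add_card_filter_not]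
  have hK : (A.filter fun p => (aug σ p.1 < aug σ p.2 ∧ p.1.2 = p.2.2 ∧ p.1.1 < p.2.1) ∧ p.1.2 = 0).card
      = ((Finset.Icc 1 n ×ˢ Finset.Icc 1 n).filter fun p => p.1 < p.2 ∧ lam p.1 ≤ lam p.2).card := by
    apply Finset.card_bij (fun q _ => (q.1.1, q.2.1))
    · intro q hq
      rw [Finset.mem_filter, hA, Finset.mem_product] at hq
      obtain ⟨⟨hq1, hq2⟩, ⟨hlt, hrow, hclt⟩, h0⟩ := hq
      have h1 := mem_augF'.1 hq1
      have h2 := mem_augF'.1 hq2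
      rw [Finset.mem_filter, Finset.mem_product, Finset.mem_Icc, Finset.mem_Icc]
      exact ⟨⟨⟨h1.1, h1.2.1⟩, ⟨h2.1, h2.2.1⟩⟩, hclt,
        hanti q.1.1 q.2.1 h1.1 hclt.le h2.2.1⟩
    · intro q hq q' hq' heq
      rw [Finset.mem_filter] at hq hq'
      simp only [Prod.mk.injEq] at heq
      have h1 : q.1.2 = 0 := hq.2.2
      have h1' : q'.1.2 = 0 := hq'.2.2
      have hr : q.1.2 = q.2.2 := hq.2.1.2.1
      have hr' : q'.1.2 = q'.2.2 := hq'.2.1.2.1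
      exact Prod.ext (Prod.ext heq.1 (by omega)) (Prod.ext heq.2 (by omega))
    · intro b hb
      rw [Finset.mem_filter, Finset.mem_product, Finset.mem_Icc, Finset.mem_Icc] at hb
      obtain ⟨⟨⟨hb1, hb2⟩, hb3, hb4⟩, hb5, _⟩ := hb
      refine ⟨((b.1, 0), (b.2, 0)), ?_, rfl⟩
      rw [Finset.mem_filter, hA, Finset.mem_product]
      refine ⟨⟨mem_augF'.2 ⟨hb1, hb2, Or.inl rfl⟩, mem_augF'.2 ⟨hb3, hb4, Or.inl rfl⟩⟩,
        ⟨?_, rfl, hb5⟩, rfl⟩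
      rw [aug_zero rfl, aug_zero rfl]
      exact hb5
  have hB : (A.filter fun p => (aug σ p.1 < aug σ p.2 ∧ p.1.2 = p.2.2 ∧ p.1.1 < p.2.1) ∧ ¬ p.1.2 = 0)
      = (PP n lam).filter fun p => σ p.1 < σ p.2 := by
    ext p
    rw [Finset.mem_filter, Finset.mem_filter, hA, Finset.mem_product, mem_PP]
    constructor
    · rintro ⟨⟨hp1, hp2⟩, ⟨hlt, hrow, hclt⟩, h0⟩
      have h2 : p.2.2 ≠ 0 := by omega
      have hd1 := mem_dgF_of_augF hp1 h0
      have hd2 := mem_dgF_of_augF hp2 h2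
      rw [aug_eq_of_ne h0, aug_eq_of_ne h2] at hlt
      exact ⟨⟨hd1, hd2, hrow, hclt⟩, hlt⟩
    · rintro ⟨⟨hd1, hd2, hrow, hclt⟩, hlt⟩
      have h0 : p.1.2 ≠ 0 := by have := mem_dgF.1 hd1; omega
      have h2 : p.2.2 ≠ 0 := by omega
      refine ⟨⟨Finset.mem_union_left _ hd1, Finset.mem_union_left _ hd2⟩,
        ⟨?_, hrow, hclt⟩, h0⟩
      rw [aug_eq_of_ne h0, aug_eq_of_ne h2]
      exact hlt
  have hC : (A.filter fun p => aug σ p.1 < aug σ p.2 ∧ p.2.2 = p.1.2 + 1 ∧ p.2.1 < p.1.1).card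
      = ((PP n lam).filter fun p => aug σ (dbox p.2) < σ p.1).card := by
    apply Finset.card_bij (fun q _ => (q.2, (q.1.1, q.2.2)))
    · intro q hq
      rw [Finset.mem_filter, hA, Finset.mem_product] at hq
      obtain ⟨⟨hq1, hq2⟩, hlt, hrow, hclt⟩ := hq
      have h2 : q.2.2 ≠ 0 := by omega
      have hd2 := mem_dgF_of_augF hq2 h2
      have hm2 := mem_dgF.1 hd2
      have hm1 := mem_augF'.1 hq1
      rw [Finset.mem_filter, mem_PP]
      refine ⟨⟨hd2, mem_dgF.2 ⟨hm1.1, hm1.2.1, Nat.one_le_iff_ne_zero.2 h2,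
        le_trans hm2.2.2.2 (hanti q.2.1 q.1.1 hm2.1 hclt.le hm1.2.1)⟩, rfl, hclt⟩, ?_⟩
      have hdb : dbox (q.1.1, q.2.2) = q.1 := by
        rw [dbox]; exact Prod.ext rfl (show q.2.2 - 1 = q.1.2 by omega)
      rw [hdb]
      rw [aug_eq_of_ne h2] at hlt
      exact hlt
    · intro q hq q' hq' heq
      rw [Finset.mem_filter] at hq hq'
      simp only [Prod.mk.injEq] at heq
      obtain ⟨e2, e11, e22⟩ := heq
      have h1 : q.2.2 = q.1.2 + 1 := hq.2.2.1
      have h1' : q'.2.2 = q'.1.2 + 1 := hq'.2.2.1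
      exact Prod.ext (Prod.ext e11 (by omega)) e2
    · intro b hb
      rw [Finset.mem_filter, mem_PP] at hb
      obtain ⟨⟨hd1, hd2, hrow, hclt⟩, hlt⟩ := hb
      have hm1 := mem_dgF.1 hd1
      have hm2 := mem_dgF.1 hd2
      refine ⟨((b.2.1, b.1.2 - 1), b.1), ?_, ?_⟩
      · rw [Finset.mem_filter, hA, Finset.mem_product]
        have hrow2 : b.1.2 = b.2.2 := hrow
        have hmem : (b.2.1, b.1.2 - 1) ∈ augF n lam := by
          rw [mem_augF']
          refine ⟨hm2.1, hm2.2.1, ?_⟩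
          show b.1.2 - 1 = 0 ∨ b.1.2 - 1 ≤ lam b.2.1
          rcases Nat.eq_zero_or_pos (b.1.2 - 1) with h | h
          · exact Or.inl h
          · right; have := hm2.2.2.2; omega
        refine ⟨⟨hmem, Finset.mem_union_left _ hd1⟩, ?_,
          show b.1.2 = b.1.2 - 1 + 1 by have := hm1.2.2.1; omega, hclt⟩
        have hdb : dbox b.2 = (b.2.1, b.1.2 - 1) := by
          rw [dbox]; exact Prod.ext rfl (show b.2.2 - 1 = b.1.2 - 1 by omega)
        have hb1 : aug σ b.1 = σ b.1 := aug_eq_of_ne (by have := hm1.2.2.1; omega)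
        show aug σ (b.2.1, b.1.2 - 1) < aug σ b.1
        rw [← hdb, hb1]
        exact hlt
      · exact Prod.ext rfl (Prod.ext rfl (show b.1.2 = b.2.2 from hrow))
  rw [hsplit, hsplit2, hK, hB, hC]
end COaux2

namespace COaux2
open CO Finset COaux

variable {n : ℕ} {lam : ℕ → ℕ} {σ : ℕ × ℕ → ℕ}

lemma sum_arm_int (hanti : Antidominant n lam) (q : ℕ × ℕ → Prop) [DecidablePred q] :
    ∑ u ∈ (dgF n lam).filter q, (armCard n lam u : ℤ)
      = ∑ p ∈ PP n lam, (if q p.2 then (1 : ℤ) else 0) := by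
  rw [Finset.sum_boole]
  exact_mod_cast sum_arm hanti q

lemma invCard_int (hanti : Antidominant n lam) :
    (invCard n lam σ : ℤ)
      = (((Finset.Icc 1 n ×ˢ Finset.Icc 1 n).filter fun p =>
            p.1 < p.2 ∧ lam p.1 ≤ lam p.2).card : ℤ)
        + ∑ p ∈ PP n lam, (if σ p.1 < σ p.2 then (1 : ℤ) else 0)
        + ∑ p ∈ PP n lam, (if aug σ (dbox p.2) < σ p.1 then (1 : ℤ) else 0) := by
  rw [invCard_eq hanti, Finset.sum_boole, Finset.sum_boole]
  push_cast
  ring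

lemma Tstat_eq (hanti : Antidominant n lam) :
    Tstat n lam σ = ∑ p ∈ PP n lam, ((1 : ℤ) - cN σ p) := by
  classical
  have hall : ∑ u ∈ dgF n lam, (armCard n lam u : ℤ) = ∑ p ∈ PP n lam, (1 : ℤ) := by
    have h := sum_arm_int (n := n) (lam := lam) hanti (fun _ => True)
    simpa using h
  have hdes : ∑ u ∈ desF n lam σ, (armCard n lam u : ℤ)
      = ∑ p ∈ PP n lam, (if aug σ (dbox p.2) < aug σ p.2 then (1 : ℤ) else 0) := by
    rw [desF]; exact sum_arm_int hanti _
  have hneq : ∑ u ∈ (dgF n lam).filter (fun u => aug σ u ≠ aug σ (dbox u)),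
        (armCard n lam u : ℤ)
      = ∑ p ∈ PP n lam, (if aug σ p.2 ≠ aug σ (dbox p.2) then (1 : ℤ) else 0) :=
    sum_arm_int hanti _
  rw [Tstat, coinv, invCard_int hanti, hall, hdes, hneq]
  have hptw : ∑ p ∈ PP n lam, ((1 : ℤ) - cN σ p)
      = ∑ p ∈ PP n lam, ((1 : ℤ)
          - ((if σ p.1 < σ p.2 then (1 : ℤ) else 0)
            + (if aug σ (dbox p.2) < σ p.1 then (1 : ℤ) else 0)
            + ((if aug σ p.2 ≠ aug σ (dbox p.2) then (1 : ℤ) else 0)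
               - (if aug σ (dbox p.2) < aug σ p.2 then (1 : ℤ) else 0)))) := by
    refine Finset.sum_congr rfl fun p hp => ?_
    have hp2 : aug σ p.2 = σ p.2 :=
      aug_eq_of_ne (by have := mem_dgF.1 (mem_PP.1 hp).2.1; omega)
    rw [cN, hp2]
    push_cast
    split_ifs <;> omega
  rw [hptw]
  rw [show ∀ (f g h e : ((ℕ×ℕ)×(ℕ×ℕ)) → ℤ), ∑ p ∈ PP n lam, ((1:ℤ) - (f p + g p + (h p - e p)))
      = ∑ p ∈ PP n lam, (1:ℤ) - ∑ p ∈ PP n lam, f p - ∑ p ∈ PP n lam, g p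
        - ∑ p ∈ PP n lam, h p + ∑ p ∈ PP n lam, e p from fun f g h e => by
    rw [← Finset.sum_sub_distrib, ← Finset.sum_sub_distrib, ← Finset.sum_sub_distrib,
      ← Finset.sum_add_distrib]
    exact Finset.sum_congr rfl fun p _ => by ring]
  ring

lemma localZ (hanti : Antidominant n lam) (hσ : Appropriate n lam σ) :
    ∀ p ∈ PP n lam, σ p.1 ≠ σ p.2 ∧ σ p.1 ≠ aug σ (dbox p.2) ∧ cN σ p = 1 := by
  classical
  obtain ⟨hfill, hna, hT⟩ := hσ
  have hfacts : ∀ p ∈ PP n lam, σ p.1 ≠ σ p.2 ∧ σ p.1 ≠ aug σ (dbox p.2) := by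
    intro p hp
    obtain ⟨h1, h2, hrow, hlt⟩ := mem_PP.1 hp
    have hm1 := mem_dgF.1 h1
    have hm2 := mem_dgF.1 h2
    constructor
    · have hatt : Attack p.1 p.2 := by
        refine ⟨fun h => ?_, Or.inl hrow⟩
        have : p.1.1 = p.2.1 := congrArg Prod.fst h
        omega
      have := hna p.1 (Finset.mem_union_left _ h1) p.2 (Finset.mem_union_left _ h2) hatt
      rwa [aug_eq_of_ne (by omega), aug_eq_of_ne (by omega)] at this
    · have hdbm : dbox p.2 ∈ augF n lam := by
        rw [mem_augF']
        refine ⟨hm2.1, hm2.2.1, ?_⟩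
        show p.2.2 - 1 = 0 ∨ p.2.2 - 1 ≤ lam p.2.1
        omega
      have hatt : Attack p.1 (dbox p.2) := by
        refine ⟨fun h => ?_, Or.inr (Or.inl ⟨show p.1.2 = p.2.2 - 1 + 1 by omega,
          show p.1.1 < p.2.1 from hlt⟩)⟩
        have h1' := congrArg Prod.fst h
        simp only [dbox] at h1'
        omega
      have := hna p.1 (Finset.mem_union_left _ h1) (dbox p.2) hdbm hatt
      rwa [aug_eq_of_ne (by omega)] at this
  intro p hp
  refine ⟨(hfacts p hp).1, (hfacts p hp).2, ?_⟩
  have hTeq := Tstat_eq (σ := σ) hanti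
  rw [hT] at hTeq
  have hnonneg : ∀ q ∈ PP n lam, (0 : ℤ) ≤ (cN σ q : ℤ) - 1 := by
    intro q hq
    obtain ⟨hne1, hne2⟩ := hfacts q hq
    rw [cN]
    push_cast
    split_ifs <;> omega
  have hsum : ∑ q ∈ PP n lam, ((cN σ q : ℤ) - 1) = 0 := by
    have h0 : ∑ q ∈ PP n lam, ((cN σ q : ℤ) - 1)
        = - ∑ q ∈ PP n lam, ((1 : ℤ) - cN σ q) := by
      rw [← Finset.sum_neg_distrib]
      exact Finset.sum_congr rfl fun q _ => by ring
    rw [h0, ← hTeq]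
    ring
  have := (Finset.sum_eq_zero_iff_of_nonneg hnonneg).1 hsum p hp
  omega

lemma keyContra {b t t' : ℕ} (hne : t ≠ t') (h1b : t' ≠ b) (h2b : t ≠ b)
    (h1 : (if t' < t then 1 else 0) + (if b < t' then 1 else 0)
      + (if t < b then (1:ℕ) else 0) = 1)
    (h2 : (if t < t' then 1 else 0) + (if b < t then 1 else 0)
      + (if t' < b then (1:ℕ) else 0) = 1) :
    False := by
  split_ifs at h1 h2 <;> omega

end COaux2

open CO in
/-- Proposition `fillingdegq`, uniqueness part. Let `λ` be an
antidominant composition and `σ, σ'` appropriate fillings of `dg'(λ)`. If for every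
row `j ≥ 1` the sets of values taken by `σ` and `σ'` on the `j`-th row coincide,
then `σ = σ'` (on the diagram). -/
theorem appropriate_filling_unique (n : ℕ) (hn : 1 ≤ n) (lam : ℕ → ℕ)
    (hanti : Antidominant n lam)
    (σ σ' : ℕ × ℕ → ℕ) (hσ : Appropriate n lam σ) (hσ' : Appropriate n lam σ')
    (hrows : ∀ j, 1 ≤ j →
      {x | ∃ i, (i, j) ∈ dgF n lam ∧ σ (i, j) = x} =
        {x | ∃ i, (i, j) ∈ dgF n lam ∧ σ' (i, j) = x}) :
    ∀ u ∈ dgF n lam, σ u = σ' u := by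
  classical
  have L := COaux2.localZ hanti hσ
  have L' := COaux2.localZ hanti hσ'
  have inj : ∀ (τ : ℕ × ℕ → ℕ), Appropriate n lam τ → ∀ i c j,
      (i, j) ∈ dgF n lam → (c, j) ∈ dgF n lam → i ≠ c → τ (i, j) ≠ τ (c, j) := by
    intro τ hτ i c j hi hc hne
    have hm := COaux.mem_dgF.1 hi
    have hatt : Attack (i, j) (c, j) := by
      refine ⟨fun h => hne ?_, Or.inl rfl⟩
      exact congrArg Prod.fst h
    have := hτ.2.1 (i, j) (Finset.mem_union_left _ hi) (c, j)
      (Finset.mem_union_left _ hc) hatt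
    rwa [COaux2.aug_eq_of_ne (σ := τ) (u := (i, j)) (show j ≠ 0 by omega),
      COaux2.aug_eq_of_ne (σ := τ) (u := (c, j)) (show j ≠ 0 by omega)] at this
  suffices H : ∀ j i, (i, j) ∈ dgF n lam → σ (i, j) = σ' (i, j) by
    intro u hu
    exact H u.2 u.1 hu
  intro j
  induction j using Nat.strong_induction_on with
  | _ j IHrow =>
  have hb : ∀ i, (i, j) ∈ dgF n lam → aug σ (i, j - 1) = aug σ' (i, j - 1) := by
    intro i hij
    rcases Nat.eq_zero_or_pos (j - 1) with h0 | h1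
    · rw [COaux2.aug_zero (σ := σ) (u := (i, j - 1)) h0,
        COaux2.aug_zero (σ := σ') (u := (i, j - 1)) h0]
    · have hm := COaux.mem_dgF.1 hij
      have hm4 : j ≤ lam i := hm.2.2.2
      have hmem : (i, j - 1) ∈ dgF n lam :=
        COaux.mem_dgF.2 ⟨hm.1, hm.2.1, h1, show j - 1 ≤ lam i by omega⟩
      rw [COaux2.aug_eq_of_ne (σ := σ) (u := (i, j - 1)) (by omega),
        COaux2.aug_eq_of_ne (σ := σ') (u := (i, j - 1)) (by omega)]
      exact IHrow (j - 1) (by omega) i hmem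
  suffices Hk : ∀ k i, (i, j) ∈ dgF n lam → n - i ≤ k → σ (i, j) = σ' (i, j) by
    intro i hi
    exact Hk (n - i) i hi le_rfl
  intro k
  induction k using Nat.strong_induction_on with
  | _ k IHk =>
  intro i hi hk
  by_contra hne0
  have hmi := COaux.mem_dgF.1 hi
  have hj1 : 1 ≤ j := hmi.2.2.1
  obtain ⟨c, hc, hct⟩ : ∃ c, (c, j) ∈ dgF n lam ∧ σ (c, j) = σ' (i, j) :=
    (Set.ext_iff.mp (hrows j hj1) (σ' (i, j))).mpr ⟨i, hi, rfl⟩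
  obtain ⟨c', hc', hct'⟩ : ∃ c', (c', j) ∈ dgF n lam ∧ σ' (c', j) = σ (i, j) :=
    (Set.ext_iff.mp (hrows j hj1) (σ (i, j))).mp ⟨i, hi, rfl⟩
  have hcne : c ≠ i := fun h => hne0 (h ▸ hct)
  have hcne' : c' ≠ i := fun h => hne0 (h ▸ hct').symm
  have hclt : c < i := by
    rcases lt_or_gt_of_ne hcne with h | h
    · exact h
    · exfalso
      have hcn : c ≤ n := (COaux.mem_dgF.1 hc).2.1
      have heqc : σ (c, j) = σ' (c, j) := IHk (n - c) (by omega) c hc le_rfl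
      exact inj σ' hσ' c i j hc hi hcne (heqc.symm.trans hct)
  have hclt' : c' < i := by
    rcases lt_or_gt_of_ne hcne' with h | h
    · exact h
    · exfalso
      have hcn : c' ≤ n := (COaux.mem_dgF.1 hc').2.1
      have heqc : σ (c', j) = σ' (c', j) := IHk (n - c') (by omega) c' hc' le_rfl
      exact inj σ hσ c' i j hc' hi hcne' (heqc.trans hct')
  have hp : ((c, j), (i, j)) ∈ COaux.PP n lam := COaux.mem_PP.2 ⟨hc, hi, rfl, hclt⟩
  have hp' : ((c', j), (i, j)) ∈ COaux.PP n lam := COaux.mem_PP.2 ⟨hc', hi, rfl, hclt'⟩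
  obtain ⟨hA1, hA2, hA3⟩ := L ((c, j), (i, j)) hp
  obtain ⟨hB1, hB2, hB3⟩ := L' ((c', j), (i, j)) hp'
  have hA2' : σ (c, j) ≠ aug σ (i, j - 1) := hA2
  have hB2' : σ' (c', j) ≠ aug σ' (i, j - 1) := hB2
  have hA3' : (if σ (c, j) < σ (i, j) then 1 else 0)
      + (if aug σ (i, j - 1) < σ (c, j) then 1 else 0)
      + (if σ (i, j) < aug σ (i, j - 1) then (1:ℕ) else 0) = 1 := hA3
  have hB3' : (if σ' (c', j) < σ' (i, j) then 1 else 0)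
      + (if aug σ' (i, j - 1) < σ' (c', j) then 1 else 0)
      + (if σ' (i, j) < aug σ' (i, j - 1) then (1:ℕ) else 0) = 1 := hB3
  rw [hct] at hA2' hA3'
  rw [hct', ← hb i hi] at hB2' hB3'
  exact COaux2.keyContra hne0 hA2' hB2' hA3' hB3'
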